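/- arXiv:2510.06806 — 5 statements merged into one kernel-verified Lean document; each statement's English description precedes it below -/
import Mathlib

section
/- Define sequences Ĝ, Ĥ, K̂ : ℕ → ℕ by Ĝ₀ = Ĥ₀ = K̂₀ = 1 and for n ≥ 1: Ĝₙ = Σ_{i+j=n-1} Ĝᵢ Ĥⱼ, Ĥₙ = Σ_{i+j=n-1} Ĝᵢ K̂ⱼ, K̂ₙ = Ĝ_{n-1}. Then Ĝ satisfies the coefficient recurrence obtained from g = 1 + x g + x² g² + x³ g³, i.e. for all n ≥ 1: Ĝₙ = Ĝ_{n-1} + Σ_{i+j=n-2} ĜᵢĜⱼ + Σ_{i+j+k=n-3} ĜᵢĜⱼĜₖ. -/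
open Finset

/-- The mutual recurrences Ĝₙ = Σ_{i+j=n-1} ĜᵢĤⱼ, Ĥₙ = Σ_{i+j=n-1} ĜᵢK̂ⱼ, K̂ₙ = Ĝ_{n-1},
with initial values 1. -/
def MutualRec (G H K : ℕ → ℕ) : Prop :=
  G 0 = 1 ∧ H 0 = 1 ∧ K 0 = 1 ∧
  (∀ n, 1 ≤ n → G n = ∑ p ∈ Finset.HasAntidiagonal.antidiagonal (n - 1), G p.1 * H p.2) ∧
  (∀ n, 1 ≤ n → H n = ∑ p ∈ Finset.HasAntidiagonal.antidiagonal (n - 1), G p.1 * K p.2) ∧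
  (∀ n, 1 ≤ n → K n = G (n - 1))

theorem single_recurrence (G H K : ℕ → ℕ) (h : MutualRec G H K) :
    ∀ n, 1 ≤ n →
      G n = G (n - 1)
        + (if 2 ≤ n then ∑ p ∈ Finset.HasAntidiagonal.antidiagonal (n - 2), G p.1 * G p.2 else 0)
        + (if 3 ≤ n then
            ∑ p ∈ Finset.HasAntidiagonal.antidiagonal (n - 3),
              G p.1 * ∑ q ∈ Finset.HasAntidiagonal.antidiagonal p.2, G q.1 * G q.2
          else 0) := by
  obtain ⟨hG0, hH0, hK0, hG, hH, hK⟩ := h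
  have hK' : ∀ q, K q = G (q - 1) := by
    intro q
    rcases Nat.eq_zero_or_pos q with rfl | hq
    · simpa [hG0] using hK0
    · exact hK q hq
  set S2 : ℕ → ℕ := fun m => ∑ p ∈ Finset.HasAntidiagonal.antidiagonal m, G p.1 * G p.2 with hS2
  have hS2r : ∀ m, S2 m = ∑ k ∈ range (m + 1), G k * G (m - k) := by
    intro m
    rw [hS2]
    exact Finset.Nat.sum_antidiagonal_eq_sum_range_succ_mk _ m
  have hH' : ∀ j, H j = G (j - 1) + (if 2 ≤ j then S2 (j - 2) else 0) := by
    intro j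
    match j with
    | 0 => simp [hH0, hG0]
    | 1 =>
      rw [hH 1 le_rfl]
      simp [hK', hG0]
    | (m + 2) =>
      rw [hH (m + 2) (by omega)]
      simp only [hK']
      have e1 : m + 2 - 1 = m + 1 := by omega
      rw [e1, Finset.Nat.sum_antidiagonal_eq_sum_range_succ_mk, Finset.sum_range_succ]
      have h1 : ∀ k ∈ range (m + 1), G k * G (m + 1 - k - 1) = G k * G (m - k) := by
        intro k hk
        simp only [mem_range] at hk
        congr 2
        omega
      rw [Finset.sum_congr rfl h1]
      have : (2 : ℕ) ≤ m + 2 := by omega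
      rw [if_pos this, hS2r]
      simp [hG0]
      omega
  intro n hn
  obtain ⟨m, rfl⟩ : ∃ m, n = m + 1 := ⟨n - 1, by omega⟩
  rw [hG (m + 1) (by omega)]
  simp only [Nat.add_sub_cancel]
  rw [Finset.Nat.sum_antidiagonal_eq_sum_range_succ_mk]
  have step : ∀ k ∈ range (m + 1),
      G k * H (m - k) = G k * G (m - k - 1) + G k * (if 2 ≤ m - k then S2 (m - k - 2) else 0) := by
    intro k _
    rw [hH' (m - k), Nat.mul_add]
  rw [Finset.sum_congr rfl step, Finset.sum_add_distrib]
  have first : ∑ k ∈ range (m + 1), G k * G (m - k - 1)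
      = G m + (if 2 ≤ m + 1 then S2 (m + 1 - 2) else 0) := by
    rw [Finset.sum_range_succ]
    rcases Nat.eq_zero_or_pos m with rfl | hm
    · simp [hG0]
    · rw [if_pos (by omega), show m + 1 - 2 = m - 1 by omega, hS2r,
        show m - 1 + 1 = m by omega]
      have h1 : ∀ k ∈ range m, G k * G (m - k - 1) = G k * G (m - 1 - k) := by
        intro k hk
        simp only [mem_range] at hk
        congr 2
        omega
      rw [Finset.sum_congr rfl h1]
      simp [hG0]
      omega
  have second : ∑ k ∈ range (m + 1), G k * (if 2 ≤ m - k then S2 (m - k - 2) else 0)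
      = (if 3 ≤ m + 1 then ∑ p ∈ Finset.HasAntidiagonal.antidiagonal (m + 1 - 3),
          G p.1 * ∑ q ∈ Finset.HasAntidiagonal.antidiagonal p.2, G q.1 * G q.2 else 0) := by
    rcases lt_or_ge m 2 with hm | hm
    · rw [if_neg (by omega)]
      apply Finset.sum_eq_zero
      intro k hk
      rw [if_neg (by omega)]
      ring
    · rw [if_pos (by omega)]
      have hsub : range (m - 1) ⊆ range (m + 1) := by
        apply Finset.range_subset_range.2; omega
      rw [Finset.Nat.sum_antidiagonal_eq_sum_range_succ_mk]
      simp only [Nat.succ_eq_add_one]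
      rw [show m + 1 - 3 + 1 = m - 1 by omega, ← Finset.sum_subset hsub]
      · apply Finset.sum_congr rfl
        intro k hk
        simp only [mem_range] at hk
        rw [if_pos (by omega), show m - k - 2 = m + 1 - 3 - k by omega]
      · intro k _ hk
        simp only [mem_range] at hk
        rw [if_neg (by omega)]
        ring
  rw [first, second]
end

section
/- Define Ĝ : ℕ → ℕ by Ĝ₀ = 1 and Ĝₙ = Ĝ_{n-1} + Σ_{i+j=n-2} ĜᵢĜⱼ + Σ_{i+j+k=n-3} ĜᵢĜⱼĜₖ for n ≥ 1 (empty sums are 0). Then for the real root z of 2z^3 + z^2 - 1 = 0 and C = 1 + 2z + 3z^2, there exists a constant M such that Ĝₙ ≤ M · Cⁿ for all n. -/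
/-!
The generating function `g = ∑ Ĝₙ Xⁿ` satisfies `g = 1 + X g + X² g² + X³ g³`, and the
coefficients of the right-hand side up to degree `N` only involve `g` below degree `N`. Hence the
partial sums `e_N = ∑_{k<N} Ĝₖ xᵏ` at any `x ≥ 0` satisfy
`e_{N+1} ≤ φ(e_N)` with `φ(s) = 1 + x s + x² s² + x³ s³` monotone on `[0, ∞)`, so they stay below
every `σ ≥ 0` with `φ(σ) ≤ σ`. For `x = 1/C`, `σ = zC` one has `φ(σ) = 1 + z + z² + z³`, and
`σ - φ(σ) = 2z³ + z² - 1 = 0`; thus `Ĝₙ ≤ σ Cⁿ`.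
-/

open Finset

/-- The single recurrence Ĝₙ = Ĝ_{n-1} + Σ_{i+j=n-2} ĜᵢĜⱼ + Σ_{i+j+k=n-3} ĜᵢĜⱼĜₖ
(empty sums are 0), with Ĝ₀ = 1. -/
def GhatRec (G : ℕ → ℕ) : Prop :=
  G 0 = 1 ∧
  ∀ n, 1 ≤ n →
    G n = G (n - 1)
      + (if 2 ≤ n then ∑ p ∈ Finset.HasAntidiagonal.antidiagonal (n - 2), G p.1 * G p.2 else 0)
      + (if 3 ≤ n then
          ∑ p ∈ Finset.HasAntidiagonal.antidiagonal (n - 3),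
            G p.1 * ∑ q ∈ Finset.HasAntidiagonal.antidiagonal p.2, G q.1 * G q.2
        else 0)

open scoped PowerSeries Polynomial

theorem Polynomial.aeval_le_aeval_of_coeff_le {S : Type*} [CommSemiring S] [PartialOrder S]
    [IsOrderedRing S] {p q : ℕ[X]} (h : ∀ n, p.coeff n ≤ q.coeff n) {x : S} (hx : 0 ≤ x) :
    aeval x p ≤ aeval x q := by
  have hp : p.natDegree < max p.natDegree q.natDegree + 1 := by omega
  have hq : q.natDegree < max p.natDegree q.natDegree + 1 := by omega
  rw [aeval_eq_sum_range' hp, aeval_eq_sum_range' hq]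
  gcongr with i
  exact h i

namespace PowerSeries

variable {R : Type*} [CommSemiring R]

theorem trunc_succ_X_pow_mul_congr {N k : ℕ} (hk : 1 ≤ k) {f h : R⟦X⟧}
    (hfh : trunc N f = trunc N h) : trunc (N + 1) (X ^ k * f) = trunc (N + 1) (X ^ k * h) := by
  ext n
  simp only [coeff_trunc, coeff_X_pow_mul']
  split_ifs with hn hkn
  · simpa [coeff_trunc, show n - k < N by omega] using congrArg (·.coeff (n - k)) hfh
  all_goals rfl

theorem trunc_succ_eq_of_eq_cubic {g : R⟦X⟧} (hg : g = 1 + X * g + X ^ 2 * g ^ 2 + X ^ 3 * g ^ 3)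
    (N : ℕ) :
    trunc (N + 1) g = trunc (N + 1) ((1 + Polynomial.X * trunc N g
      + Polynomial.X ^ 2 * trunc N g ^ 2 + Polynomial.X ^ 3 * trunc N g ^ 3 : R[X]) : R⟦X⟧) := by
  have hpow : ∀ k, 1 ≤ k →
      trunc (N + 1) (X ^ k * g ^ k) = trunc (N + 1) (X ^ k * (trunc N g : R⟦X⟧) ^ k) :=
    fun k hk => trunc_succ_X_pow_mul_congr hk (trunc_trunc_pow g N k).symm
  have hone : trunc (N + 1) (X * g) = trunc (N + 1) (X * (trunc N g : R⟦X⟧)) := by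
    simpa using hpow 1 le_rfl
  conv_lhs => rw [hg]
  simp only [Polynomial.coe_add, Polynomial.coe_mul, Polynomial.coe_pow, Polynomial.coe_X,
    Polynomial.coe_one, map_add, hone, hpow 2 (by norm_num), hpow 3 (by norm_num)]

theorem coeff_trunc_coe_le (n m : ℕ) (p : ℕ[X]) : (trunc n (p : ℕ⟦X⟧)).coeff m ≤ p.coeff m := by
  rw [coeff_trunc, Polynomial.coeff_coe]
  split_ifs <;> simp

variable {S : Type*} [CommSemiring S] [PartialOrder S] [IsOrderedRing S]

theorem aeval_trunc_le_of_eq_cubic {g : ℕ⟦X⟧} (hg : g = 1 + X * g + X ^ 2 * g ^ 2 + X ^ 3 * g ^ 3)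
    {x σ : S} (hx : 0 ≤ x) (hσ : 0 ≤ σ) (hfix : 1 + x * σ + x ^ 2 * σ ^ 2 + x ^ 3 * σ ^ 3 ≤ σ)
    (N : ℕ) : Polynomial.aeval x (trunc N g) ≤ σ := by
  induction N with
  | zero => simpa using hσ
  | succ N ih =>
    set e := Polynomial.aeval x (trunc N g)
    have he : 0 ≤ e := by
      simp only [e, Polynomial.aeval_def, eval₂_trunc_eq_sum_range]
      positivity
    calc Polynomial.aeval x (trunc (N + 1) g)
        ≤ Polynomial.aeval x (1 + Polynomial.X * trunc N g + Polynomial.X ^ 2 * trunc N g ^ 2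
            + Polynomial.X ^ 3 * trunc N g ^ 3) := by
          refine Polynomial.aeval_le_aeval_of_coeff_le (fun m => ?_) hx
          rw [trunc_succ_eq_of_eq_cubic hg]
          exact coeff_trunc_coe_le _ _ _
      _ = 1 + x * e + x ^ 2 * e ^ 2 + x ^ 3 * e ^ 3 := by simp [e]
      _ ≤ 1 + x * σ + x ^ 2 * σ ^ 2 + x ^ 3 * σ ^ 3 := by gcongr
      _ ≤ σ := hfix

theorem coeff_mul_pow_le_of_eq_cubic {g : ℕ⟦X⟧}
    (hg : g = 1 + X * g + X ^ 2 * g ^ 2 + X ^ 3 * g ^ 3)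
    {x σ : S} (hx : 0 ≤ x) (hσ : 0 ≤ σ) (hfix : 1 + x * σ + x ^ 2 * σ ^ 2 + x ^ 3 * σ ^ 3 ≤ σ)
    (n : ℕ) : ((coeff n g : ℕ) : S) * x ^ n ≤ σ := by
  calc ((coeff n g : ℕ) : S) * x ^ n ≤ ∑ i ∈ range (n + 1), ((coeff i g : ℕ) : S) * x ^ i :=
        single_le_sum (f := fun i => ((coeff i g : ℕ) : S) * x ^ i) (fun i _ => by positivity)
          (self_mem_range_succ n)
    _ = Polynomial.aeval x (trunc (n + 1) g) := by
      simp [Polynomial.aeval_def, eval₂_trunc_eq_sum_range]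
    _ ≤ σ := aeval_trunc_le_of_eq_cubic hg hx hσ hfix (n + 1)

end PowerSeries

theorem GhatRec.mk_eq {G : ℕ → ℕ} (hG : GhatRec G) :
    PowerSeries.mk G = 1 + PowerSeries.X * PowerSeries.mk G
      + PowerSeries.X ^ 2 * PowerSeries.mk G ^ 2 + PowerSeries.X ^ 3 * PowerSeries.mk G ^ 3 := by
  ext (_ | m)
  · simp [hG.1]
  · rw [PowerSeries.coeff_mk, hG.2 (m + 1) m.succ_pos, map_add, map_add, map_add,
      PowerSeries.coeff_one, PowerSeries.coeff_succ_X_mul, PowerSeries.coeff_X_pow_mul',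
      PowerSeries.coeff_X_pow_mul', pow_two (PowerSeries.mk G), pow_three (PowerSeries.mk G)]
    simp only [PowerSeries.coeff_mul, PowerSeries.coeff_mk, m.succ_ne_zero, if_false, zero_add,
      Nat.add_sub_cancel]

theorem geometric_upper_bound (G : ℕ → ℕ) (hG : GhatRec G)
    (z : ℝ) (hz : 2 * z ^ 3 + z ^ 2 - 1 = 0) :
    ∃ M : ℝ, ∀ n, (G n : ℝ) ≤ M * (1 + 2 * z + 3 * z ^ 2) ^ n := by
  have hz_pos : 0 < z := by
    nlinarith [sq_nonneg z, sq_nonneg (z + 1)]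
  set C := 1 + 2 * z + 3 * z ^ 2
  have hC : 0 < C := by positivity
  have hzC : C⁻¹ * (z * C) = z := by field_simp
  have hfix : 1 + C⁻¹ * (z * C) + C⁻¹ ^ 2 * (z * C) ^ 2 + C⁻¹ ^ 3 * (z * C) ^ 3 ≤ z * C := by
    rw [← mul_pow, ← mul_pow, hzC]
    linear_combination -hz
  refine ⟨z * C, fun n => ?_⟩
  have h := PowerSeries.coeff_mul_pow_le_of_eq_cubic hG.mk_eq (by positivity) (by positivity) hfix n
  rwa [PowerSeries.coeff_mk, inv_pow, ← div_eq_mul_inv, div_le_iff₀ (by positivity)] at h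
end

section
/- Let z ∈ (0,1) satisfy 2z^3 + z^2 - 1 = 0 and set x = z/(1 + z + z^2 + z^3). Let Ĝ be defined by Ĝ₀ = 1, Ĝₙ = Ĝ_{n-1} + Σ_{i+j=n-2} ĜᵢĜⱼ + Σ_{i+j+k=n-3} ĜᵢĜⱼĜₖ. Then the partial sums Σ_{n=0}^{N} Ĝₙ xⁿ are bounded above by g = z/x, i.e. Σ_{n=0}^{N} Ĝₙ xⁿ ≤ 1 + z + z² + z³ for all N. -/
open Finset

lemma shift1 (f : ℕ → ℝ) (m : ℕ) (h0 : f 0 = 0) :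
    ∑ k ∈ range (m + 1), f k = ∑ k ∈ range m, f (k + 1) := by
  rw [Finset.sum_range_succ', h0, add_zero]

lemma shift2 (f : ℕ → ℝ) (m : ℕ) (h0 : f 0 = 0) (h1 : f 1 = 0) :
    ∑ k ∈ range (m + 1), f k = ∑ k ∈ range (m - 1), f (k + 2) := by
  match m with
  | 0 => simpa using h0
  | (m + 1) =>
    rw [Finset.sum_range_succ', h0, add_zero, Finset.sum_range_succ', h1, add_zero]; norm_num

lemma conv_le (x : ℝ) (hx : 0 ≤ x) (u v : ℕ → ℝ) (hu : ∀ i, 0 ≤ u i)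
    (hv : ∀ i, 0 ≤ v i) (m : ℕ) :
    ∑ n ∈ range m, (∑ p ∈ Finset.HasAntidiagonal.antidiagonal n, u p.1 * v p.2) * x ^ n ≤
      (∑ i ∈ range m, u i * x ^ i) * (∑ j ∈ range m, v j * x ^ j) := by
  have h1 : ∀ n ∈ range m, (∑ p ∈ Finset.HasAntidiagonal.antidiagonal n, u p.1 * v p.2) * x ^ n
      = ∑ p ∈ Finset.HasAntidiagonal.antidiagonal n, (u p.1 * x ^ p.1) * (v p.2 * x ^ p.2) := by
    intro n _
    rw [Finset.sum_mul]
    refine Finset.sum_congr rfl fun p hp => ?_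
    rw [Finset.HasAntidiagonal.mem_antidiagonal] at hp
    rw [← hp, pow_add]; ring
  rw [Finset.sum_congr rfl h1, Finset.sum_sigma']
  rw [Finset.sum_mul_sum, ← Finset.sum_product']
  have heq : (∑ s ∈ (range m).sigma (fun n => Finset.HasAntidiagonal.antidiagonal n),
        (u s.2.1 * x ^ s.2.1) * (v s.2.2 * x ^ s.2.2))
      = ∑ p ∈ ((range m ×ˢ range m).filter fun p => p.1 + p.2 < m),
        (u p.1 * x ^ p.1) * (v p.2 * x ^ p.2) := by
    refine Finset.sum_nbij' (fun s => s.2) (fun p => ⟨p.1 + p.2, p⟩) ?_ ?_ ?_ ?_ ?_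
    · rintro ⟨n, p⟩ hs
      simp only [Finset.mem_sigma, Finset.mem_range, Finset.HasAntidiagonal.mem_antidiagonal] at hs
      simp only [Finset.mem_filter, Finset.mem_product, Finset.mem_range]
      omega
    · rintro p hp
      simp only [Finset.mem_filter, Finset.mem_product, Finset.mem_range] at hp
      simp only [Finset.mem_sigma, Finset.mem_range, Finset.HasAntidiagonal.mem_antidiagonal]
      exact ⟨hp.2, trivial⟩
    · rintro ⟨n, p⟩ hs
      simp only [Finset.mem_sigma, Finset.mem_range, Finset.HasAntidiagonal.mem_antidiagonal] at hs
      simp [hs.2]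
    · rintro p _; rfl
    · rintro ⟨n, p⟩ _; rfl
  rw [heq]
  refine Finset.sum_le_sum_of_subset_of_nonneg (Finset.filter_subset _ _) ?_
  intro p _ _
  exact mul_nonneg (mul_nonneg (hu _) (pow_nonneg hx _))
    (mul_nonneg (hv _) (pow_nonneg hx _))

theorem partial_sums_bounded (z : ℝ) (hz0 : 0 < z) (hz1 : z < 1)
    (hz : 2 * z ^ 3 + z ^ 2 - 1 = 0)
    (x : ℝ) (hx : x = z / (1 + z + z ^ 2 + z ^ 3))
    (G : ℕ → ℕ) (hG : GhatRec G) :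
    ∀ N, ∑ n ∈ Finset.range (N + 1), (G n : ℝ) * x ^ n ≤ 1 + z + z ^ 2 + z ^ 3 := by
  have hgpos : (0:ℝ) < 1 + z + z ^ 2 + z ^ 3 := by positivity
  have hx0 : 0 < x := by rw [hx]; positivity
  set g : ℝ := 1 + z + z ^ 2 + z ^ 3 with hgdef
  have hxg : x * g = z := by rw [hx]; field_simp
  have hg1 : (1:ℝ) ≤ g := by nlinarith
  -- abbreviations
  set C : ℕ → ℕ := fun n => ∑ p ∈ Finset.HasAntidiagonal.antidiagonal n, G p.1 * G p.2 with hC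
  set D : ℕ → ℕ := fun n => ∑ p ∈ Finset.HasAntidiagonal.antidiagonal n,
      G p.1 * ∑ q ∈ Finset.HasAntidiagonal.antidiagonal p.2, G q.1 * G q.2 with hD
  have hGnn : ∀ i, (0:ℝ) ≤ (G i : ℝ) * x ^ i := fun i =>
    mul_nonneg (Nat.cast_nonneg _) (pow_nonneg hx0.le _)
  -- partial sums of G bounded by g on any range, given bound for range (N+1)
  intro N
  induction N with
  | zero => simpa [hG.1] using hg1
  | succ N ih =>
    have hrange : ∀ m, m ≤ N + 1 → ∑ i ∈ range m, (G i : ℝ) * x ^ i ≤ g := by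
      intro m hm
      calc ∑ i ∈ range m, (G i : ℝ) * x ^ i
          ≤ ∑ i ∈ range (N + 1), (G i : ℝ) * x ^ i := by
            refine Finset.sum_le_sum_of_subset_of_nonneg ?_ fun i _ _ => hGnn i
            exact Finset.range_subset_range.mpr hm
        _ ≤ g := ih
    have hCcast : ∀ n, ((C n : ℝ))
        = ∑ p ∈ Finset.HasAntidiagonal.antidiagonal n, (G p.1 : ℝ) * (G p.2 : ℝ) := by
      intro n; rw [hC]; push_cast; rfl
    have hDcast : ∀ n, ((D n : ℝ))
        = ∑ p ∈ Finset.HasAntidiagonal.antidiagonal n, (G p.1 : ℝ) * (C p.2 : ℝ) := by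
      intro n; rw [hD, hC]; push_cast; rfl
    -- conv bounds
    have hCsum : ∀ m, m ≤ N + 1 → ∑ n ∈ range m, (C n : ℝ) * x ^ n ≤ g ^ 2 := by
      intro m hm
      have := conv_le x hx0.le (fun i => (G i : ℝ)) (fun i => (G i : ℝ))
        (fun i => Nat.cast_nonneg _) (fun i => Nat.cast_nonneg _) m
      simp_rw [hCcast]
      calc ∑ n ∈ range m, (∑ p ∈ Finset.HasAntidiagonal.antidiagonal n, (G p.1:ℝ) * (G p.2:ℝ)) * x ^ n
          ≤ (∑ i ∈ range m, (G i:ℝ) * x ^ i) * (∑ j ∈ range m, (G j:ℝ) * x ^ j) := this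
        _ ≤ g * g := by
            have h1 := hrange m hm
            have h2 : (0:ℝ) ≤ ∑ i ∈ range m, (G i:ℝ) * x ^ i :=
              Finset.sum_nonneg fun i _ => hGnn i
            nlinarith
        _ = g ^ 2 := by ring
    have hDsum : ∀ m, m ≤ N + 1 → ∑ n ∈ range m, (D n : ℝ) * x ^ n ≤ g ^ 3 := by
      intro m hm
      have := conv_le x hx0.le (fun i => (G i : ℝ)) (fun i => (C i : ℝ))
        (fun i => Nat.cast_nonneg _) (fun i => Nat.cast_nonneg _) m
      simp_rw [hDcast]
      calc ∑ n ∈ range m, (∑ p ∈ Finset.HasAntidiagonal.antidiagonal n, (G p.1:ℝ) * (C p.2:ℝ)) * x ^ n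
          ≤ (∑ i ∈ range m, (G i:ℝ) * x ^ i) * (∑ j ∈ range m, (C j:ℝ) * x ^ j) := this
        _ ≤ g * g ^ 2 := by
            have h1 := hrange m hm
            have h2 : (0:ℝ) ≤ ∑ i ∈ range m, (G i:ℝ) * x ^ i :=
              Finset.sum_nonneg fun i _ => hGnn i
            have h3 := hCsum m hm
            have h4 : (0:ℝ) ≤ ∑ j ∈ range m, (C j:ℝ) * x ^ j :=
              Finset.sum_nonneg fun j _ =>
                mul_nonneg (Nat.cast_nonneg _) (pow_nonneg hx0.le _)
            nlinarith
        _ = g ^ 3 := by ring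
    -- decompose the sum
    rw [Finset.sum_range_succ']
    have hsummand : ∀ k ∈ range (N + 1), ((G (k+1) : ℝ)) * x ^ (k+1)
        = (G k : ℝ) * x ^ (k+1)
          + (if 1 ≤ k then (C (k-1) : ℝ) else 0) * x ^ (k+1)
          + (if 2 ≤ k then (D (k-2) : ℝ) else 0) * x ^ (k+1) := by
      intro k _
      rw [hG.2 (k+1) (by omega)]
      simp only [show (2 ≤ k+1) ↔ (1 ≤ k) by omega, show (3 ≤ k+1) ↔ (2 ≤ k) by omega,
        show k+1-1 = k from rfl, show k+1-2 = k-1 by omega, show k+1-3 = k-2 by omega,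
        ← hC, ← hD]
      push_cast [apply_ite (fun n : ℕ => (n : ℝ))]
      simp only [← hCcast, ← hDcast]
      ring
    rw [Finset.sum_congr rfl hsummand]
    rw [Finset.sum_add_distrib, Finset.sum_add_distrib]
    have B1 : ∑ k ∈ range (N+1), (G k : ℝ) * x ^ (k+1) ≤ x * g := by
      have : ∑ k ∈ range (N+1), (G k : ℝ) * x ^ (k+1)
          = (∑ k ∈ range (N+1), (G k : ℝ) * x ^ k) * x := by
        rw [Finset.sum_mul]; exact Finset.sum_congr rfl fun k _ => by rw [pow_succ]; ring
      rw [this, mul_comm]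
      exact mul_le_mul_of_nonneg_left ih hx0.le
    have B2 : ∑ k ∈ range (N+1), (if 1 ≤ k then (C (k-1) : ℝ) else 0) * x ^ (k+1)
        ≤ x ^ 2 * g ^ 2 := by
      rw [shift1 _ _ (by norm_num)]
      have heq : ∀ k ∈ range N, (if 1 ≤ k + 1 then (C (k+1-1) : ℝ) else 0) * x ^ (k+1+1)
          = ((C k : ℝ) * x ^ k) * x ^ 2 := by
        intro k _
        simp only [show 1 ≤ k + 1 by omega, if_true, show k+1-1 = k from rfl]
        ring
      rw [Finset.sum_congr rfl heq, ← Finset.sum_mul]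
      calc (∑ k ∈ range N, (C k : ℝ) * x ^ k) * x ^ 2
          ≤ g ^ 2 * x ^ 2 := by
            exact mul_le_mul_of_nonneg_right (hCsum N (by omega)) (by positivity)
        _ = x ^ 2 * g ^ 2 := by ring
    have B3 : ∑ k ∈ range (N+1), (if 2 ≤ k then (D (k-2) : ℝ) else 0) * x ^ (k+1)
        ≤ x ^ 3 * g ^ 3 := by
      rw [shift2 _ _ (by norm_num) (by norm_num)]
      have heq : ∀ k ∈ range (N - 1),
          (if 2 ≤ k + 2 then (D (k+2-2) : ℝ) else 0) * x ^ (k+2+1)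
          = ((D k : ℝ) * x ^ k) * x ^ 3 := by
        intro k _
        simp only [show 2 ≤ k + 2 by omega, if_true, show k+2-2 = k by omega]
        ring
      rw [Finset.sum_congr rfl heq, ← Finset.sum_mul]
      calc (∑ k ∈ range (N-1), (D k : ℝ) * x ^ k) * x ^ 3
          ≤ g ^ 3 * x ^ 3 := by
            refine mul_le_mul_of_nonneg_right (hDsum (N-1) (by omega)) (by positivity)
        _ = x ^ 3 * g ^ 3 := by ring
    have h0 : (G 0 : ℝ) * x ^ 0 = 1 := by simp [hG.1]
    rw [h0]
    have hx2 : x ^ 2 * g ^ 2 = z ^ 2 := by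
      have : (x * g) ^ 2 = z ^ 2 := by rw [hxg]
      nlinarith [this]
    have hx3 : x ^ 3 * g ^ 3 = z ^ 3 := by
      have : (x * g) ^ 3 = z ^ 3 := by rw [hxg]
      nlinarith [this]
    have : g = 1 + x * g + x ^ 2 * g ^ 2 + x ^ 3 * g ^ 3 := by
      rw [hxg, hx2, hx3]
    linarith [B1, B2, B3]
end

section
/- Let f(z) = 1 + z + z² + z³ and suppose x > 0, z > 0 satisfy z = x·f(z) and x·f'(z) = 1. Then x = 1/(1 + 2z + 3z²) and 1/x > 3.61. -/
/-! Dividing `z = x f(z)` by `x f'(z) = 1` eliminates `x`: the singularity satisfies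
`z f'(z) = f(z)`, i.e. `2z³ + z² = 1`, whose positive root is `z ≈ 0.65730`. Then
`1/x = f'(z) = 1 + 2z + 3z²`, and `z > 0.6572` already forces `f'(z) > 3.61`. -/

theorem mul_eq_of_eq_mul_of_mul_eq_one {R : Type*} [CommSemiring R] {x z a b : R}
    (ha : z = x * a) (hb : x * b = 1) : z * b = a := by
  rw [ha, mul_right_comm, hb, one_mul]

theorem lt_of_two_mul_pow_three_add_sq_eq_one {z : ℝ} (hz : 0 < z)
    (h : 2 * z ^ 3 + z ^ 2 = 1) : 0.6572 < z := by
  by_contra! hle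
  nlinarith [mul_pos hz hz, mul_le_mul_of_nonneg_left hle (mul_pos hz hz).le,
    mul_le_mul_of_nonneg_left hle hz.le]

theorem singularity_conditions_general (x z : ℝ) (hz : 0 < z)
    (h1 : z = x * (1 + z + z ^ 2 + z ^ 3))
    (h2 : x * (1 + 2 * z + 3 * z ^ 2) = 1) :
    x = 1 / (1 + 2 * z + 3 * z ^ 2) ∧ 1 / x > 3.61 := by
  have hx : x = 1 / (1 + 2 * z + 3 * z ^ 2) := eq_one_div_of_mul_eq_one_left h2
  have hcubic : 2 * z ^ 3 + z ^ 2 = 1 := by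
    linear_combination mul_eq_of_eq_mul_of_mul_eq_one h1 h2
  refine ⟨hx, ?_⟩
  rw [hx, one_div_one_div]
  nlinarith [lt_of_two_mul_pow_three_add_sq_eq_one hz hcubic]

theorem singularity_conditions (x z : ℝ) (hx : 0 < x) (hz : 0 < z)
    (h1 : z = x * (1 + z + z ^ 2 + z ^ 3))
    (h2 : x * (1 + 2 * z + 3 * z ^ 2) = 1) :
    x = 1 / (1 + 2 * z + 3 * z ^ 2) ∧ 1 / x > 3.61 :=
  singularity_conditions_general x z hz h1 h2
end

section
/- Let C = 1 + 2z + 3z² where z is the real root of 2z³ + z² - 1 = 0, and let x = 1/C. Then the sequence Ĝₙ defined by Ĝ₀ = 1, Ĝₙ = Ĝ_{n-1} + Σ_{i+j=n-2} ĜᵢĜⱼ + Σ_{i+j+k=n-3} ĜᵢĜⱼĜₖ satisfies Ĝₙ ≤ (z/x) · Cⁿ for all n, where z/x = 1 + z + z² + z³. -/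
open Finset

lemma conv_sum_le (f g : ℕ → ℝ) (hf : ∀ i, 0 ≤ f i) (hg : ∀ i, 0 ≤ g i) (M : ℕ) :
    ∑ m ∈ range M, ∑ p ∈ antidiagonal m, f p.1 * g p.2 ≤
      (∑ i ∈ range M, f i) * (∑ i ∈ range M, g i) := by
  rw [Finset.sum_mul_sum, ← Finset.sum_product']
  rw [show (∑ m ∈ range M, ∑ p ∈ antidiagonal m, f p.1 * g p.2)
      = ∑ p ∈ (range M).biUnion (fun m => antidiagonal m), f p.1 * g p.2 from
    (Finset.sum_biUnion ?_).symm]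
  · apply Finset.sum_le_sum_of_subset_of_nonneg
    · intro p hp
      simp only [Finset.mem_biUnion, Finset.mem_range, Finset.HasAntidiagonal.mem_antidiagonal] at hp
      obtain ⟨m, hm, hpm⟩ := hp
      simp only [Finset.mem_product, Finset.mem_range]
      omega
    · intro p _ _
      exact mul_nonneg (hf _) (hg _)
  · intro a _ b _ hab
    simp only [Finset.disjoint_left, Finset.HasAntidiagonal.mem_antidiagonal]
    intro p hp hq
    omega

lemma shift_ite_sum (f : ℕ → ℝ) (k N : ℕ) :
    ∑ i ∈ range N, (if k ≤ i then f (i - k) else 0) = ∑ m ∈ range (N - k), f m := by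
  induction N with
  | zero => simp
  | succ K ih =>
    rw [Finset.sum_range_succ, ih]
    by_cases hk : k ≤ K
    · rw [if_pos hk, show K + 1 - k = (K - k) + 1 by omega, Finset.sum_range_succ]
    · rw [if_neg hk, add_zero, show K + 1 - k = K - k by omega]

theorem Ghat_geometric_bound (z : ℝ) (hz : 2 * z ^ 3 + z ^ 2 - 1 = 0)
    (C : ℝ) (hC : C = 1 + 2 * z + 3 * z ^ 2) (x : ℝ) (hx : x = 1 / C)
    (G : ℕ → ℕ) (hG : GhatRec G) :
    ∀ n, (G n : ℝ) ≤ (z / x) * C ^ n := by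
  obtain ⟨hG0, hGrec⟩ := hG
  have hz0 : 0 < z := by nlinarith [sq_nonneg z, sq_nonneg (z + 1), sq_nonneg (2 * z + 1)]
  have hC0 : 0 < C := by rw [hC]; nlinarith
  have hx0 : 0 < x := by rw [hx]; positivity
  set L : ℝ := 1 + z + z ^ 2 + z ^ 3 with hL
  have hxL : x * L = z := by
    rw [hx]; rw [hC]; field_simp; nlinarith
  have hL0 : 0 < L := by positivity
  have hzxL : z / x = L := by
    rw [← hxL]; exact mul_div_cancel_left₀ L hx0.ne'
  set A : ℕ → ℝ := fun n => (G n : ℝ) * x ^ n with hA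
  have hA0 : ∀ n, 0 ≤ A n := fun n => mul_nonneg (Nat.cast_nonneg _) (pow_nonneg hx0.le _)
  set d : ℕ → ℝ := fun m => ∑ p ∈ antidiagonal m, A p.1 * A p.2 with hd
  set e : ℕ → ℝ := fun m => ∑ p ∈ antidiagonal m, A p.1 * d p.2 with he
  have hd0 : ∀ m, 0 ≤ d m := fun m =>
    Finset.sum_nonneg fun p _ => mul_nonneg (hA0 _) (hA0 _)
  have he0 : ∀ m, 0 ≤ e m := fun m =>
    Finset.sum_nonneg fun p _ => mul_nonneg (hA0 _) (hd0 _)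
  have d_eq : ∀ m, (∑ p ∈ antidiagonal m, (G p.1 : ℝ) * (G p.2 : ℝ)) * x ^ m = d m := by
    intro m
    rw [hd, Finset.sum_mul]
    refine Finset.sum_congr rfl fun p hp => ?_
    rw [Finset.HasAntidiagonal.mem_antidiagonal] at hp
    rw [← hp, pow_add]; simp only [hA]; ring
  have e_eq : ∀ m,
      (∑ p ∈ antidiagonal m, (G p.1 : ℝ) * ∑ q ∈ antidiagonal p.2, (G q.1 : ℝ) * (G q.2 : ℝ))
        * x ^ m = e m := by
    intro m
    rw [he, Finset.sum_mul]
    refine Finset.sum_congr rfl fun p hp => ?_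
    rw [Finset.HasAntidiagonal.mem_antidiagonal] at hp
    rw [← d_eq p.2, ← hp, pow_add]; simp only [hA]; ring
  have key : ∀ N, ∑ m ∈ range N, A m ≤ L := by
    intro N
    induction N with
    | zero => simp [hL0.le]
    | succ N ih =>
      have hstep : ∀ i, A (i + 1) =
          x * A i + (if 1 ≤ i then x ^ 2 * d (i - 1) else 0)
            + (if 2 ≤ i then x ^ 3 * e (i - 2) else 0) := by
        intro i
        have hrec := hGrec (i + 1) (Nat.le_add_left 1 i)
        simp only [Nat.add_sub_cancel,
          show (2 ≤ i + 1) = (1 ≤ i) by simp only [eq_iff_iff]; omega,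
          show (3 ≤ i + 1) = (2 ≤ i) by simp only [eq_iff_iff]; omega,
          show i + 1 - 2 = i - 1 from by omega,
          show i + 1 - 3 = i - 2 from by omega] at hrec
        simp only [hA]
        rw [hrec]
        push_cast
        rw [add_mul, add_mul]
        congr 1
        · congr 1
          · rw [pow_succ]; ring
          · split_ifs with h
            · rw [show i + 1 = 2 + (i - 1) by omega, pow_add, ← d_eq (i - 1)]; ring
            · exact zero_mul _
        · split_ifs with h
          · rw [show i + 1 = 3 + (i - 2) by omega, pow_add, ← e_eq (i - 2)]; ring
          · exact zero_mul _
      rw [Finset.sum_range_succ']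
      have hA0' : A 0 = 1 := by simp [hA, hG0]
      rw [hA0']
      have hsum : ∑ i ∈ range N, A (i + 1)
          = x * ∑ i ∈ range N, A i
            + x ^ 2 * ∑ m ∈ range (N - 1), d m
            + x ^ 3 * ∑ m ∈ range (N - 2), e m := by
        rw [Finset.mul_sum, Finset.mul_sum, Finset.mul_sum,
          ← shift_ite_sum (fun m => x ^ 2 * d m) 1 N,
          ← shift_ite_sum (fun m => x ^ 3 * e m) 2 N,
          ← Finset.sum_add_distrib, ← Finset.sum_add_distrib]
        refine Finset.sum_congr rfl fun i _ => ?_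
        rw [hstep i]
      rw [hsum]
      have hmono : ∀ M₁ M₂ : ℕ, M₁ ≤ M₂ → ∑ m ∈ range M₁, A m ≤ ∑ m ∈ range M₂, A m :=
        fun M₁ M₂ h => Finset.sum_le_sum_of_subset_of_nonneg
          (Finset.range_subset_range.2 h) (fun i _ _ => hA0 i)
      have hS1 : ∑ m ∈ range (N - 1), A m ≤ L := le_trans (hmono _ _ (by omega)) ih
      have hS2 : ∑ m ∈ range (N - 2), A m ≤ L := le_trans (hmono _ _ (by omega)) ih
      have hSnn : ∀ M : ℕ, 0 ≤ ∑ m ∈ range M, A m :=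
        fun M => Finset.sum_nonneg fun i _ => hA0 i
      have hdsum : ∑ m ∈ range (N - 1), d m ≤ L ^ 2 := by
        calc ∑ m ∈ range (N - 1), d m
            ≤ (∑ i ∈ range (N - 1), A i) * (∑ i ∈ range (N - 1), A i) :=
              conv_sum_le A A hA0 hA0 _
          _ ≤ L * L := mul_le_mul hS1 hS1 (hSnn _) hL0.le
          _ = L ^ 2 := (sq L).symm
      have hesum : ∑ m ∈ range (N - 2), e m ≤ L ^ 3 := by
        calc ∑ m ∈ range (N - 2), e m
            ≤ (∑ i ∈ range (N - 2), A i) * (∑ i ∈ range (N - 2), d i) :=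
              conv_sum_le A d hA0 hd0 _
          _ ≤ L * L ^ 2 := by
              refine mul_le_mul hS2 ?_ (Finset.sum_nonneg fun i _ => hd0 i) hL0.le
              calc ∑ m ∈ range (N - 2), d m
                  ≤ (∑ i ∈ range (N - 2), A i) * (∑ i ∈ range (N - 2), A i) :=
                    conv_sum_le A A hA0 hA0 _
                _ ≤ L * L := mul_le_mul hS2 hS2 (hSnn _) hL0.le
                _ = L ^ 2 := (sq L).symm
          _ = L ^ 3 := by ring
      have hfix : x * L + x ^ 2 * L ^ 2 + x ^ 3 * L ^ 3 + 1 = L := by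
        have h1 : x ^ 2 * L ^ 2 = z ^ 2 := by rw [← hxL]; ring
        have h2 : x ^ 3 * L ^ 3 = z ^ 3 := by rw [← hxL]; ring
        rw [h1, h2, hxL, hL]; ring
      calc x * ∑ i ∈ range N, A i + x ^ 2 * ∑ m ∈ range (N - 1), d m
            + x ^ 3 * ∑ m ∈ range (N - 2), e m + 1
          ≤ x * L + x ^ 2 * L ^ 2 + x ^ 3 * L ^ 3 + 1 := by
            gcongr
        _ = L := hfix
  intro n
  have hAn : A n ≤ L :=
    le_trans (Finset.single_le_sum (fun i _ => hA0 i) (Finset.self_mem_range_succ n)) (key (n + 1))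
  have hxC : x * C = 1 := by rw [hx]; field_simp
  have hxCn : x ^ n * C ^ n = 1 := by rw [← mul_pow, hxC, one_pow]
  rw [hzxL]
  calc (G n : ℝ) = (G n : ℝ) * (x ^ n * C ^ n) := by rw [hxCn, mul_one]
    _ = A n * C ^ n := by rw [hA]; ring
    _ ≤ L * C ^ n := by gcongr
end
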